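/- Let T be the set of real numbers obtained as finite towers a₁^(a₂^(···^aₙ)) (with the empty tower equal to 1) whose entries aᵢ are of the form ((m₁/n₁)^(m₂/n₂))^((m₃/n₃)^(m₄/n₄)) for positive natural numbers m₁, ..., m₄, n₁, ..., n₄, where ^ denotes the real power function. Then T has no greatest element and no least element: for every t ∈ T there exist s, u ∈ T with s < t < u. -/

import Mathlib

/-- The set of base/exponent elements of form (6):
`((m₁/n₁)^(m₂/n₂))^((m₃/n₃)^(m₄/n₄))` with positive natural parameters. -/
def S : Set ℝ := {a : ℝ | ∃ m₁ m₂ m₃ m₄ n₁ n₂ n₃ n₄ : ℕ,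
  0 < m₁ ∧ 0 < m₂ ∧ 0 < m₃ ∧ 0 < m₄ ∧ 0 < n₁ ∧ 0 < n₂ ∧ 0 < n₃ ∧ 0 < n₄ ∧
  a = (((m₁ : ℝ) / (n₁ : ℝ)) ^ ((m₂ : ℝ) / (n₂ : ℝ))) ^
      (((m₃ : ℝ) / (n₃ : ℝ)) ^ ((m₄ : ℝ) / (n₄ : ℝ)))}

/-- Tower evaluation of a list of reals: `tower [] = 1` and
`tower (a :: l) = a ^ tower l` (real power function). -/
noncomputable def tower : List ℝ → ℝ
  | [] => 1
  | a :: l => a ^ tower l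

/-- The set generated by the paper's general element (5): finite towers
whose entries all lie in `S`. -/
def T : Set ℝ := {x : ℝ | ∃ l : List ℝ, (∀ a ∈ l, a ∈ S) ∧ x = tower l}

lemma S_pos {a : ℝ} (ha : a ∈ S) : 0 < a := by
  obtain ⟨m₁, m₂, m₃, m₄, n₁, n₂, n₃, n₄, h1, h2, h3, h4, h5, h6, h7, h8, rfl⟩ := ha
  have : (0:ℝ) < (m₁ : ℝ) / (n₁ : ℝ) := by positivity
  exact Real.rpow_pos_of_pos (Real.rpow_pos_of_pos this _) _

lemma tower_pos : ∀ l : List ℝ, (∀ a ∈ l, a ∈ S) → 0 < tower l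
  | [], _ => by simp [tower]
  | a :: l, h => by
      have ha : a ∈ S := h a List.mem_cons_self
      exact Real.rpow_pos_of_pos (S_pos ha) _

lemma rat_mem_T (m n : ℕ) (hm : 0 < m) (hn : 0 < n) : ((m : ℝ) / (n : ℝ)) ∈ T := by
  refine ⟨[(m : ℝ) / (n : ℝ)], ?_, ?_⟩
  · intro a hamem
    simp only [List.mem_singleton] at hamem
    subst hamem
    refine ⟨m, 1, 1, 1, n, 1, 1, 1, hm, one_pos, one_pos, one_pos, hn, one_pos,
      one_pos, one_pos, ?_⟩
    norm_num
  · simp [tower]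

/-- `T` has no greatest and no least element. -/
theorem T_no_first_no_last (t : ℝ) (ht : t ∈ T) :
    ∃ s ∈ T, ∃ u ∈ T, s < t ∧ t < u := by
  obtain ⟨l, hl, rfl⟩ := ht
  have htpos : 0 < tower l := tower_pos l hl
  obtain ⟨k, hk⟩ := exists_nat_one_div_lt htpos
  obtain ⟨N, hN⟩ := exists_nat_gt (tower l)
  have hN0 : 0 < N := by
    by_contra h
    push_neg at h
    interval_cases N
    simpa using hN.trans' htpos
  refine ⟨1 / (k + 1 : ℝ), ?_, (N : ℝ), ?_, ?_, ?_⟩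
  · have := rat_mem_T 1 (k + 1) one_pos (Nat.succ_pos k)
    simpa using this
  · have := rat_mem_T N 1 hN0 one_pos
    simpa using this
  · exact hk
  · exact hN
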